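/- arXiv:2408.15709 — 2 statements merged into one kernel-verified Lean document; each statement's English description precedes it below -/
import Mathlib

section
/- Let D = (A, B, α, β) and D' = (A', B', α', β') be exact couples (exact sequences A →2 A →α B →β A →2 A with α∘β = 2, and similarly for D'). A morphism D → D' is a pair (f₁ : A → A', f₂ : B → B') commuting with all structure maps. Then the kernel of the forgetful map Hom(D, D') → Hom(A, A'), (f₁,f₂) ↦ f₁, is naturally isomorphic to Hom(A₂, A'/2A'). -/
/-!
With `f₁ = 0` the conditions on `f₂ : B → B'` say exactly that `f₂` kills `im α` and takes values
in `ker β'`, so the kernel is `Hom(B / im α, ker β')`. Exactness identifies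
`B / im α = B / ker β ≅ im β = A₂` and `ker β' = im α' ≅ A' / ker α' = A' / 2A'`.
-/

open CategoryTheory

/-- `Ext¹_ℤ(A, B)` as an object of `ModuleCat ℤ`. -/
noncomputable abbrev Ext1 (A B : Type) [AddCommGroup A] [AddCommGroup B] : ModuleCat ℤ :=
  ((Ext ℤ (ModuleCat.{0} ℤ) 1).obj (Opposite.op (ModuleCat.of ℤ A))).obj (ModuleCat.of ℤ B)

/-- The map induced on `Ext¹` in the second (covariant) variable by `g : B →+ B'`. -/
noncomputable def Ext1.mapRight (A : Type) [AddCommGroup A] {B B' : Type} [AddCommGroup B]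
    [AddCommGroup B'] (g : B →+ B') : Ext1 A B ⟶ Ext1 A B' :=
  ((Ext ℤ (ModuleCat.{0} ℤ) 1).obj (Opposite.op (ModuleCat.of ℤ A))).map
    (ModuleCat.ofHom g.toIntLinearMap)

/-- The map induced on `Ext¹` in the first (contravariant) variable by `f : A' →+ A`. -/
noncomputable def Ext1.mapLeft {A A' : Type} [AddCommGroup A] [AddCommGroup A']
    (f : A' →+ A) (B : Type) [AddCommGroup B] : Ext1 A B ⟶ Ext1 A' B :=
  ((Ext ℤ (ModuleCat.{0} ℤ) 1).map
    ((ModuleCat.ofHom f.toIntLinearMap : ModuleCat.of ℤ A' ⟶ ModuleCat.of ℤ A).op)).app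
    (ModuleCat.of ℤ B)

/-- Multiplication by `n` as an additive homomorphism. -/
def smulHom (n : ℤ) (A : Type) [AddCommGroup A] : A →+ A :=
  AddMonoidHom.mk' (fun a => n • a) (fun a b => smul_add n a b)

/-- The subgroup `nA` of an abelian group `A`. -/
abbrev nSub (n : ℤ) (A : Type) [AddCommGroup A] : AddSubgroup A := (smulHom n A).range

/-- The subgroup `2A`. -/
abbrev twoSub (A : Type) [AddCommGroup A] : AddSubgroup A := nSub 2 A

/-- The 2-torsion subgroup `A₂`. -/
abbrev tor2 (A : Type) [AddCommGroup A] : AddSubgroup A := (smulHom 2 A).ker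

lemma twoSub_le_comap {B B' : Type} [AddCommGroup B] [AddCommGroup B'] (g : B →+ B') :
    twoSub B ≤ (twoSub B').comap g := by
  rintro x ⟨y, rfl⟩
  exact ⟨g y, by simp [smulHom]⟩

/-- The map `B/2B → B'/2B'` induced by `g : B →+ B'`. -/
def qmap2 {B B' : Type} [AddCommGroup B] [AddCommGroup B'] (g : B →+ B') :
    B ⧸ twoSub B →+ B' ⧸ twoSub B' :=
  QuotientAddGroup.map (twoSub B) (twoSub B') g (twoSub_le_comap g)

/-- The map `A₂ → B₂` induced on 2-torsion subgroups by `f : A →+ B`. -/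
def torMap {A B : Type} [AddCommGroup A] [AddCommGroup B] (f : A →+ B) :
    ↥(tor2 A) →+ ↥(tor2 B) :=
  AddMonoidHom.codRestrict (f.comp (tor2 A).subtype) (tor2 B) (by
    rintro ⟨x, hx⟩
    have hx' : (2 : ℤ) • x = 0 := hx
    show (2 : ℤ) • f x = 0
    rw [← map_zsmul f 2 x, hx', map_zero])

/-- The subgroup of maps `f₂ : B →+ B'` which together with `f₁ = 0` form a morphism of exact
couples, i.e. `f₂ ∘ α = 0` and `β' ∘ f₂ = 0`: the kernel of the forgetful map. -/
def forgetKer {A B A' B' : Type} [AddCommGroup A] [AddCommGroup B] [AddCommGroup A']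
    [AddCommGroup B'] (α : A →+ B) (β' : B' →+ A') : AddSubgroup (B →+ B') where
  carrier := {f₂ | f₂.comp α = 0 ∧ β'.comp f₂ = 0}
  zero_mem' := by constructor <;> ext x <;> simp
  add_mem' := by
    rintro p q ⟨hp1, hp2⟩ ⟨hq1, hq2⟩
    refine ⟨?_, ?_⟩
    · show (p + q).comp α = 0
      rw [AddMonoidHom.add_comp, hp1, hq1, add_zero]
    · show β'.comp (p + q) = 0
      rw [AddMonoidHom.comp_add, hp2, hq2, add_zero]
  neg_mem' := by
    rintro p ⟨hp1, hp2⟩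
    refine ⟨?_, ?_⟩
    · show (-p).comp α = 0
      ext x
      have h := congrFun (congrArg DFunLike.coe hp1) x
      simp only [AddMonoidHom.comp_apply] at h ⊢
      simp [h]
    · show β'.comp (-p) = 0
      ext x
      have h := congrFun (congrArg DFunLike.coe hp2) x
      simp only [AddMonoidHom.comp_apply] at h ⊢
      simp [h]

theorem mem_forgetKer_iff {A B A' B' : Type} [AddCommGroup A] [AddCommGroup B] [AddCommGroup A']
    [AddCommGroup B'] {α : A →+ B} {β' : B' →+ A'} {f : B →+ B'} :
    f ∈ forgetKer α β' ↔ α.range ≤ f.ker ∧ f.range ≤ β'.ker := by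
  rw [AddMonoidHom.range_le_ker_iff, AddMonoidHom.range_le_ker_iff]
  rfl

def forgetKerEquiv {A B A' B' : Type} [AddCommGroup A] [AddCommGroup B] [AddCommGroup A']
    [AddCommGroup B'] (α : A →+ B) (β' : B' →+ A') :
    forgetKer α β' ≃+ (B ⧸ α.range →+ β'.ker) where
  toFun f := QuotientAddGroup.lift α.range
    ((f : B →+ B').codRestrict β'.ker fun b => (mem_forgetKer_iff.1 f.2).2 ⟨b, rfl⟩)
    fun b hb => Subtype.ext ((mem_forgetKer_iff.1 f.2).1 hb)
  invFun φ := ⟨β'.ker.subtype.comp (φ.comp (QuotientAddGroup.mk' α.range)),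
    mem_forgetKer_iff.2 ⟨fun b hb => by simp [(QuotientAddGroup.eq_zero_iff b).2 hb],
      by rintro _ ⟨b, rfl⟩; exact (φ b).2⟩⟩
  left_inv f := rfl
  right_inv φ := QuotientAddGroup.addMonoidHom_ext _ rfl
  map_add' f g := QuotientAddGroup.addMonoidHom_ext _ rfl

theorem forget_kernel_iso_general (A B A' B' : Type) [AddCommGroup A] [AddCommGroup B]
    [AddCommGroup A'] [AddCommGroup B']
    (α : A →+ B) (β : B →+ A) (α' : A' →+ B') (β' : B' →+ A')
    (h2 : α.range = β.ker) (h3 : β.range = tor2 A)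
    (h1' : α'.ker = twoSub A') (h2' : α'.range = β'.ker) :
    Nonempty (↥(forgetKer α β') ≃+ (↥(tor2 A) →+ (A' ⧸ twoSub A'))) := by
  have cokerα : B ⧸ α.range ≃+ tor2 A :=
    (QuotientAddGroup.quotientAddEquivOfEq h2).trans <|
      (QuotientAddGroup.quotientKerEquivRange β).trans (AddEquiv.addSubgroupCongr h3)
  have kerβ' : β'.ker ≃+ A' ⧸ twoSub A' :=
    (AddEquiv.addSubgroupCongr h2'.symm).trans <|
      (QuotientAddGroup.quotientKerEquivRange α').symm.trans
        (QuotientAddGroup.quotientAddEquivOfEq h1')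
  exact ⟨(forgetKerEquiv α β').trans <|
    cokerα.addMonoidHomCongrLeft.trans kerβ'.addMonoidHomCongrRight⟩

/-- For exact couples `D = (A, B, α, β)` and `D' = (A', B', α', β')`, the
kernel of the forgetful map `Hom(D, D') → Hom(A, A')`, `(f₁, f₂) ↦ f₁`, is isomorphic to
`Hom(A₂, A'/2A')`. -/
theorem forget_kernel_iso (A B A' B' : Type) [AddCommGroup A] [AddCommGroup B]
    [AddCommGroup A'] [AddCommGroup B']
    (α : A →+ B) (β : B →+ A) (α' : A' →+ B') (β' : B' →+ A')
    (h1 : α.ker = twoSub A) (h2 : α.range = β.ker) (h3 : β.range = tor2 A)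
    (h4 : ∀ b : B, α (β b) = (2 : ℤ) • b)
    (h1' : α'.ker = twoSub A') (h2' : α'.range = β'.ker) (h3' : β'.range = tor2 A')
    (h4' : ∀ b : B', α' (β' b) = (2 : ℤ) • b) :
    Nonempty (↥(forgetKer α β') ≃+ (↥(tor2 A) →+ (A' ⧸ twoSub A'))) :=
  forget_kernel_iso_general A B A' B' α β α' β' h2 h3 h1' h2'
end

section
/- Let D = (A, B, α, β) and D' = (A', B', α', β') be exact couples with α∘β = 2 and α'∘β' = 2. Then there is a short exact sequence 0 → Hom(A₂, A'/2A') → Hom_{𝒟}(D, D') → Hom(A, A') where the last map is (f₁, f₂) ↦ f₁; moreover the image of the forgetful map consists of all f₁ : A → A' that admit a compatible f₂. -/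
open CategoryTheory

/-- The group of morphisms of exact couples `D = (A, B, α, β) → D' = (A', B', α', β')`:
pairs `(f₁, f₂)` commuting with the structure maps. -/
def coupleHom {A B A' B' : Type} [AddCommGroup A] [AddCommGroup B] [AddCommGroup A']
    [AddCommGroup B'] (α : A →+ B) (β : B →+ A) (α' : A' →+ B') (β' : B' →+ A') :
    AddSubgroup ((A →+ A') × (B →+ B')) where
  carrier := {p | p.2.comp α = α'.comp p.1 ∧ β'.comp p.2 = p.1.comp β}
  zero_mem' := by constructor <;> ext x <;> simp
  add_mem' := by
    rintro p q ⟨hp1, hp2⟩ ⟨hq1, hq2⟩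
    refine ⟨?_, ?_⟩
    · show (p.2 + q.2).comp α = α'.comp (p.1 + q.1)
      rw [AddMonoidHom.add_comp, AddMonoidHom.comp_add, hp1, hq1]
    · show β'.comp (p.2 + q.2) = (p.1 + q.1).comp β
      rw [AddMonoidHom.comp_add, AddMonoidHom.add_comp, hp2, hq2]
  neg_mem' := by
    rintro p ⟨hp1, hp2⟩
    refine ⟨?_, ?_⟩
    · show (-p.2).comp α = α'.comp (-p.1)
      ext x
      have h := congrFun (congrArg DFunLike.coe hp1) x
      simp only [AddMonoidHom.comp_apply] at h ⊢
      simp [h]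
    · show β'.comp (-p.2) = (-p.1).comp β
      ext x
      have h := congrFun (congrArg DFunLike.coe hp2) x
      simp only [AddMonoidHom.comp_apply] at h ⊢
      simp [h]

/-- The forgetful map `Hom(D, D') → Hom(A, A')`, `(f₁, f₂) ↦ f₁`. -/
def coupleHomForget {A B A' B' : Type} [AddCommGroup A] [AddCommGroup B] [AddCommGroup A']
    [AddCommGroup B'] (α : A →+ B) (β : B →+ A) (α' : A' →+ B') (β' : B' →+ A') :
    ↥(coupleHom α β α' β') →+ (A →+ A') :=
  (AddMonoidHom.fst (A →+ A') (B →+ B')).comp (coupleHom α β α' β').subtype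

/-!
A morphism of exact couples with `f₁ = 0` is a map `f₂ : B → B'` with `f₂ ∘ α = 0` and
`β' ∘ f₂ = 0`. By exactness the first condition says that `f₂` factors through
`B / αA ≅ βB = A₂`, and the second that it lands in `ker β' = α'A' ≅ A'/2A'`. Hence these `f₂`
are exactly the maps `ᾱ' ∘ φ ∘ β` with `φ : A₂ → A'/2A'`, and `φ` is determined by `f₂` because
`β : B → A₂` is onto and `ᾱ' : A'/2A' → B'` is injective.
-/

namespace AddMonoidHom

variable {M N P Q : Type*} [AddCommGroup M] [AddCommGroup N] [AddCommGroup P] [AddCommGroup Q]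

theorem compHom'_injective {g : M →+ N} (hg : Function.Surjective g) :
    Function.Injective (compHom' g : (N →+ P) →+ M →+ P) :=
  fun _ _ h => cancel_right hg |>.mp h

theorem compHom_injective {ι : P →+ Q} (hι : Function.Injective ι) :
    Function.Injective (compHom ι : (M →+ P) →+ M →+ Q) :=
  fun _ _ h => cancel_left hι |>.mp h

theorem mem_range_compHom'_iff {g : M →+ N} (hg : Function.Surjective g) (f : M →+ P) :
    f ∈ (compHom' g).range ↔ g.ker ≤ f.ker := by
  constructor
  · rintro ⟨φ, rfl⟩ x hx
    simp_all [mem_ker]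
  · intro h
    exact ⟨liftOfSurjective g hg ⟨f, h⟩,
      liftOfRightInverse_comp g _ (Function.rightInverse_surjInv hg) ⟨f, h⟩⟩

theorem mem_range_compHom_iff {ι : P →+ Q} (hι : Function.Injective ι) (f : M →+ Q) :
    f ∈ (compHom ι).range ↔ f.range ≤ ι.range := by
  constructor
  · rintro ⟨ψ, rfl⟩ _ ⟨x, rfl⟩
    exact ⟨ψ x, rfl⟩
  · intro h
    let f' : M →+ ι.range := f.codRestrict ι.range fun x => h ⟨x, rfl⟩
    refine ⟨(ofInjective hι).symm.toAddMonoidHom.comp f', ?_⟩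
    ext x
    exact congrArg Subtype.val ((ofInjective hι).apply_symm_apply _)

theorem mem_range_compHom_comp_compHom'_iff {g : M →+ N} (hg : Function.Surjective g)
    {ι : P →+ Q} (hι : Function.Injective ι) (f : M →+ Q) :
    f ∈ ((compHom ι).comp (compHom' g)).range ↔ g.ker ≤ f.ker ∧ f.range ≤ ι.range := by
  constructor
  · rintro ⟨φ, rfl⟩
    refine ⟨fun x hx => ?_, (mem_range_compHom_iff hι _).1 ⟨φ.comp g, rfl⟩⟩
    simp_all [mem_ker]
  · rintro ⟨hker, hrange⟩
    obtain ⟨ψ, rfl⟩ := (mem_range_compHom_iff hι f).2 hrange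
    rw [compHom_apply_apply, ker_comp_of_injective ψ ι hι] at hker
    obtain ⟨φ, rfl⟩ := (mem_range_compHom'_iff hg ψ).2 hker
    exact ⟨φ, rfl⟩

theorem codRestrict_surjective {f : M →+ N} {S : AddSubgroup N} (hf : ∀ x, f x ∈ S)
    (hS : S ≤ f.range) : Function.Surjective (f.codRestrict S hf) := by
  rintro ⟨y, hy⟩
  obtain ⟨x, rfl⟩ := hS hy
  exact ⟨x, rfl⟩

end AddMonoidHom

theorem QuotientAddGroup.range_lift {M N : Type*} [AddCommGroup M] [AddCommGroup N]
    (S : AddSubgroup M) (f : M →+ N) (hS : S ≤ f.ker) : (lift S f hS).range = f.range := by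
  conv_rhs => rw [← lift_comp_mk' S f hS]
  rw [AddMonoidHom.range_comp, AddMonoidHom.range_eq_top_of_surjective _ (mk'_surjective _),
    ← AddMonoidHom.range_eq_map]

section CoupleHom

variable {A B A' B' : Type} {H : Type*} [AddCommGroup A] [AddCommGroup B] [AddCommGroup A']
  [AddCommGroup B'] [AddCommGroup H] {α : A →+ B} {β : B →+ A} {α' : A' →+ B'} {β' : B' →+ A'}

theorem zero_prod_mem_coupleHom_iff (f₂ : B →+ B') :
    (0, f₂) ∈ coupleHom α β α' β' ↔ α.range ≤ f₂.ker ∧ f₂.range ≤ β'.ker := by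
  rw [AddMonoidHom.range_le_ker_iff, AddMonoidHom.range_le_ker_iff]
  show f₂.comp α = α'.comp 0 ∧ β'.comp f₂ = (0 : A →+ A').comp β ↔ _
  rw [AddMonoidHom.comp_zero, AddMonoidHom.zero_comp]

def coupleHomOfSnd (s : H →+ B →+ B') (hs : ∀ h, (0, s h) ∈ coupleHom α β α' β') :
    H →+ coupleHom α β α' β' :=
  ((AddMonoidHom.inr _ _).comp s).codRestrict _ hs

theorem coupleHomOfSnd_injective {s : H →+ B →+ B'}
    (hs : ∀ h, (0, s h) ∈ coupleHom α β α' β') (hinj : Function.Injective s) :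
    Function.Injective (coupleHomOfSnd s hs) :=
  fun _ _ h => hinj (congrArg (fun p : coupleHom α β α' β' => p.1.2) h)

theorem range_coupleHomOfSnd {s : H →+ B →+ B'}
    (hs : ∀ h, (0, s h) ∈ coupleHom α β α' β')
    (hrange : ∀ f₂, (0, f₂) ∈ coupleHom α β α' β' → f₂ ∈ s.range) :
    (coupleHomOfSnd s hs).range = (coupleHomForget α β α' β').ker := by
  ext ⟨⟨f₁, f₂⟩, hf⟩
  constructor
  · rintro ⟨h, hh⟩
    rw [← hh]
    rfl
  · intro hker
    obtain rfl : f₁ = 0 := hker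
    obtain ⟨h, rfl⟩ := hrange f₂ hf
    exact ⟨h, rfl⟩

theorem mem_range_coupleHomForget_iff (f₁ : A →+ A') :
    f₁ ∈ (coupleHomForget α β α' β').range ↔
      ∃ f₂ : B →+ B', f₂.comp α = α'.comp f₁ ∧ β'.comp f₂ = f₁.comp β := by
  constructor
  · rintro ⟨⟨⟨_, f₂⟩, hf⟩, rfl⟩
    exact ⟨f₂, hf⟩
  · rintro ⟨f₂, hf⟩
    exact ⟨⟨(f₁, f₂), hf⟩, rfl⟩

end CoupleHom

theorem coupleHom_short_exact_general (A B A' B' : Type) [AddCommGroup A] [AddCommGroup B]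
    [AddCommGroup A'] [AddCommGroup B']
    (α : A →+ B) (β : B →+ A) (α' : A' →+ B') (β' : B' →+ A')
    (h2 : α.range = β.ker) (h3 : β.range = tor2 A)
    (h1' : α'.ker = twoSub A') (h2' : α'.range = β'.ker) :
    ∃ j : (↥(tor2 A) →+ (A' ⧸ twoSub A')) →+ ↥(coupleHom α β α' β'),
      Function.Injective j ∧
      j.range = (coupleHomForget α β α' β').ker ∧
      ∀ f₁ : A →+ A', f₁ ∈ (coupleHomForget α β α' β').range ↔
        ∃ f₂ : B →+ B', f₂.comp α = α'.comp f₁ ∧ β'.comp f₂ = f₁.comp β := by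
  let g : B →+ tor2 A := β.codRestrict (tor2 A) fun b => h3 ▸ ⟨b, rfl⟩
  have hg : Function.Surjective g := AddMonoidHom.codRestrict_surjective _ h3.ge
  let ι : A' ⧸ twoSub A' →+ B' := QuotientAddGroup.lift (twoSub A') α' h1'.ge
  have hι : Function.Injective ι := (QuotientAddGroup.injective_lift_iff _ _ _).2 h1'.symm
  let s := (AddMonoidHom.compHom ι).comp (AddMonoidHom.compHom' g)
  have hs : ∀ f₂, f₂ ∈ s.range ↔ (0, f₂) ∈ coupleHom α β α' β' := fun f₂ => by
    rw [AddMonoidHom.mem_range_compHom_comp_compHom'_iff hg hι, zero_prod_mem_coupleHom_iff,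
      AddMonoidHom.ker_codRestrict, h2, QuotientAddGroup.range_lift, h2']
  refine ⟨coupleHomOfSnd s fun φ => (hs _).1 ⟨φ, rfl⟩, ?_, ?_, mem_range_coupleHomForget_iff⟩
  · exact coupleHomOfSnd_injective _
      ((AddMonoidHom.compHom_injective hι).comp (AddMonoidHom.compHom'_injective hg))
  · exact range_coupleHomOfSnd _ fun f₂ => (hs f₂).2

/-- For exact couples `D` and `D'` there is a short exact sequence
`0 → Hom(A₂, A'/2A') → Hom_𝒟(D, D') → Hom(A, A')`, where the last map is the forgetful map
`(f₁, f₂) ↦ f₁`, whose image consists of exactly those `f₁` admitting a compatible `f₂`. -/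
theorem coupleHom_short_exact (A B A' B' : Type) [AddCommGroup A] [AddCommGroup B]
    [AddCommGroup A'] [AddCommGroup B']
    (α : A →+ B) (β : B →+ A) (α' : A' →+ B') (β' : B' →+ A')
    (h1 : α.ker = twoSub A) (h2 : α.range = β.ker) (h3 : β.range = tor2 A)
    (h4 : ∀ b : B, α (β b) = (2 : ℤ) • b)
    (h1' : α'.ker = twoSub A') (h2' : α'.range = β'.ker) (h3' : β'.range = tor2 A')
    (h4' : ∀ b : B', α' (β' b) = (2 : ℤ) • b) :
    ∃ j : (↥(tor2 A) →+ (A' ⧸ twoSub A')) →+ ↥(coupleHom α β α' β'),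
      Function.Injective j ∧
      j.range = (coupleHomForget α β α' β').ker ∧
      ∀ f₁ : A →+ A', f₁ ∈ (coupleHomForget α β α' β').range ↔
        ∃ f₂ : B →+ B', f₂.comp α = α'.comp f₁ ∧ β'.comp f₂ = f₁.comp β :=
  coupleHom_short_exact_general A B A' B' α β α' β' h2 h3 h1' h2'
end
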